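/- Suppose n < 2k. Consider the update sequence where the minimum-opinion agent updates at times t = 0,…,k−2 and the maximum-opinion agent updates at times t = k−1,…,2k−3. Then with T = 2k−2, the opinion spread contracts: max_i x_i(T) − min_i x_i(T) ≤ (1 − 1/k)·(max_i x_i(0) − min_i x_i(0)). -/

import Mathlib

open scoped Classical
open Finset

noncomputable def nearList {n : ℕ} (x : Fin n → ℝ) (i : Fin n) : List (Fin n) :=
  @List.insertionSort (Fin n)
    (fun j j' => |x j - x i| < |x j' - x i| ∨ (|x j - x i| = |x j' - x i| ∧ j ≤ j'))
    (Classical.decRel _) (List.finRange n)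

/-- The set of the `k` agents nearest to `i` in opinion distance (ties broken by lower index). -/
noncomputable def nbr {n : ℕ} (k : ℕ) (x : Fin n → ℝ) (i : Fin n) : Finset (Fin n) :=
  ((nearList x i).take k).toFinset

/-- The asynchronous update `f(x,i)`. -/
noncomputable def upd {n : ℕ} (k : ℕ) (x : Fin n → ℝ) (i : Fin n) : Fin n → ℝ :=
  Function.update x i ((∑ j ∈ nbr k x i, x j) / k)

/-- A configuration is clustered if all neighbors of every agent share its opinion. -/
def Clustered {n : ℕ} (k : ℕ) (x : Fin n → ℝ) : Prop :=
  ∀ i : Fin n, ∀ j ∈ nbr k x i, x j = x i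

/-- `μ(x)`: lowest index attaining the minimum. -/
noncomputable def argminIdx {n : ℕ} [NeZero n] (x : Fin n → ℝ) : Fin n :=
  (Finset.univ.filter fun i => ∀ j, x i ≤ x j).min' (by
    obtain ⟨i, -, hi⟩ := Finset.exists_min_image Finset.univ x Finset.univ_nonempty
    exact ⟨i, Finset.mem_filter.mpr ⟨Finset.mem_univ _, fun j => hi j (Finset.mem_univ j)⟩⟩)

/-- `M(x)`: lowest index attaining the maximum. -/
noncomputable def argmaxIdx {n : ℕ} [NeZero n] (x : Fin n → ℝ) : Fin n :=
  argminIdx (fun i => -x i)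

/-- Trajectory of the dynamics with (possibly state-dependent) update selector `σ`. -/
noncomputable def traj {n : ℕ} (k : ℕ) (σ : ℕ → (Fin n → ℝ) → Fin n) (x0 : Fin n → ℝ) :
    ℕ → Fin n → ℝ
  | 0 => x0
  | t + 1 => upd k (traj k σ x0 t) (σ t (traj k σ x0 t))

/-!
Let `s` be the value written by the first minimum update (the average of `x0` over the `k` agents
nearest the minimum) and `S` the value written by the first maximum update. Minimum updates only
raise opinions, each one lifts an agent below `s` to at least `s`, and at most `k - 1` agents start
below `s`; so after `k - 1` of them every opinion is `≥ s`. Dually the maximum phase ends with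
every opinion `≤ S`, and it never pushes an opinion below `s`.

To bound `S - s`, let `c = k s - (k - 1) min x0`, an upper bound for the `k` agents averaged into
`s`. A minimum update never lifts an agent above a level below which at least `k` agents lie, so
`k` agents stay `≤ c` throughout the first phase. As `n < 2k`, one of them is among the `k` agents
averaged into `S`, and the others are `≤ max x0`; hence `k S ≤ c + (k - 1) max x0`, which is
`S - s ≤ (1 - 1/k) (max x0 - min x0)`.
-/

section Nbr

variable {n : ℕ} (k : ℕ) (x : Fin n → ℝ) (i : Fin n)

lemma nearList_perm : (nearList x i).Perm (List.finRange n) :=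
  @List.perm_insertionSort _ _ (Classical.decRel _) _

lemma card_nbr : #(nbr k x i) = min k n := by
  have hnodup := (nearList_perm x i).nodup_iff.mpr (List.nodup_finRange n)
  rw [nbr, List.toFinset_card_of_nodup (hnodup.sublist (List.take_sublist _ _)),
    List.length_take, (nearList_perm x i).length_eq, List.length_finRange]

lemma nearList_pairwise :
    (nearList x i).Pairwise
      (fun j j' => |x j - x i| < |x j' - x i| ∨ (|x j - x i| = |x j' - x i| ∧ j ≤ j')) := by
  set r : Fin n → Fin n → Prop :=
    fun j j' => |x j - x i| < |x j' - x i| ∨ (|x j - x i| = |x j' - x i| ∧ j ≤ j')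
  have hr : ∀ j j', r j j' ↔ toLex (|x j - x i|, j) ≤ toLex (|x j' - x i|, j') :=
    fun j j' => (Prod.Lex.toLex_le_toLex (x := (|x j - x i|, j)) (y := (|x j' - x i|, j'))).symm
  have : Std.Total r := ⟨fun a b => by simpa only [hr] using le_total _ _⟩
  have : IsTrans _ r := ⟨fun a b c => by simpa only [hr] using le_trans⟩
  exact @List.pairwise_insertionSort _ r (Classical.decRel _) _ _ _

variable {k x i} in
lemma abs_sub_le_of_mem_nbr_of_notMem {j j' : Fin n} (hj : j ∈ nbr k x i)
    (hj' : j' ∉ nbr k x i) : |x j - x i| ≤ |x j' - x i| := by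
  have hsplit := List.take_append_drop k (nearList x i)
  have hsorted := nearList_pairwise x i
  rw [← hsplit, List.pairwise_append] at hsorted
  have hj'drop : j' ∈ (nearList x i).drop k := by
    have hj'mem : j' ∈ nearList x i := (nearList_perm x i).mem_iff.mpr (List.mem_finRange j')
    rw [← hsplit, List.mem_append] at hj'mem
    exact hj'mem.resolve_left fun h => hj' (List.mem_toFinset.mpr h)
  rcases hsorted.2.2 j (List.mem_toFinset.mp hj) j' hj'drop with h | h
  · exact h.le
  · exact h.1.le

lemma nbr_neg : nbr k (-x) i = nbr k x i := by
  simp only [nbr, nearList, Pi.neg_apply, neg_sub_neg, abs_sub_comm (x i)]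
  congr

end Nbr

section Sums

variable {ι : Type*}

lemma Finset.sum_le_sum_of_card_eq_of_le_compl {M : Type*} [AddCommMonoid M] [LinearOrder M]
    [IsOrderedAddMonoid M] {N L : Finset ι} {x : ι → M} (hcard : #N = #L)
    (hN : ∀ j ∈ N, ∀ j' ∉ N, x j ≤ x j') : ∑ j ∈ N, x j ≤ ∑ j ∈ L, x j := by
  rcases (L \ N).eq_empty_or_nonempty with hLN | hLN
  · have hLsubN : L ⊆ N := Finset.sdiff_eq_empty_iff_subset.mp hLN
    rw [Finset.eq_of_subset_of_card_le hLsubN hcard.le]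
  obtain ⟨j₀, hj₀, hmin⟩ := (L \ N).exists_min_image x hLN
  calc ∑ j ∈ N, x j = ∑ j ∈ N ∩ L, x j + ∑ j ∈ N \ L, x j := (sum_inter_add_sum_sdiff _ _ _).symm
    _ ≤ ∑ j ∈ N ∩ L, x j + #(N \ L) • x j₀ := by
      gcongr
      exact sum_le_card_nsmul _ _ _ fun j hj =>
        hN j (mem_sdiff.mp hj).1 j₀ (mem_sdiff.mp hj₀).2
    _ = ∑ j ∈ L ∩ N, x j + #(L \ N) • x j₀ := by rw [inter_comm, card_sdiff_comm hcard]
    _ ≤ ∑ j ∈ L ∩ N, x j + ∑ j ∈ L \ N, x j := by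
      gcongr
      exact card_nsmul_le_sum _ _ _ hmin
    _ = ∑ j ∈ L, x j := sum_inter_add_sum_sdiff _ _ _

variable {N : Finset ι} {y : ι → ℝ} {j₀ : ι}

lemma sum_le_add_card_sub_one_mul {M : ℝ} (hM : ∀ j ∈ N, y j ≤ M) (hj₀ : j₀ ∈ N) :
    ∑ j ∈ N, y j ≤ y j₀ + (#N - 1 : ℝ) * M := by
  have hcard : ((#(N.erase j₀) : ℕ) : ℝ) = #N - 1 := by
    rw [card_erase_of_mem hj₀, Nat.cast_sub (card_pos.mpr ⟨j₀, hj₀⟩), Nat.cast_one]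
  rw [← add_sum_erase N y hj₀, ← hcard, ← nsmul_eq_mul]
  gcongr
  exact sum_le_card_nsmul _ _ _ fun j hj => hM j (mem_of_mem_erase hj)

lemma add_card_sub_one_mul_le_sum {m : ℝ} (hm : ∀ j ∈ N, m ≤ y j) (hj₀ : j₀ ∈ N) :
    y j₀ + (#N - 1 : ℝ) * m ≤ ∑ j ∈ N, y j := by
  have h := sum_le_add_card_sub_one_mul (y := -y) (M := -m) (fun j hj => neg_le_neg (hm j hj)) hj₀
  simp only [Pi.neg_apply, sum_neg_distrib] at h
  linarith

end Sums

section MinStep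

variable {n : ℕ} [NeZero n] {k : ℕ}

lemma argminIdx_le (x : Fin n → ℝ) (j : Fin n) : x (argminIdx x) ≤ x j :=
  (mem_filter.mp (min'_mem {i | ∀ j, x i ≤ x j} _)).2 j

lemma le_of_mem_nbr_argminIdx {x : Fin n → ℝ} {j j' : Fin n} (hj : j ∈ nbr k x (argminIdx x))
    (hj' : j' ∉ nbr k x (argminIdx x)) : x j ≤ x j' := by
  have h := abs_sub_le_of_mem_nbr_of_notMem hj hj'
  rwa [abs_of_nonneg (sub_nonneg.mpr (argminIdx_le x j)),
    abs_of_nonneg (sub_nonneg.mpr (argminIdx_le x j')), sub_le_sub_iff_right] at h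

variable (k)

noncomputable def minNbrAvg (x : Fin n → ℝ) : ℝ :=
  (∑ j ∈ nbr k x (argminIdx x), x j) / k

noncomputable def minStep (x : Fin n → ℝ) : Fin n → ℝ :=
  upd k x (argminIdx x)

lemma minStep_eq_update (x : Fin n → ℝ) :
    minStep k x = Function.update x (argminIdx x) (minNbrAvg k x) := rfl

variable {k}

lemma minNbrAvg_mono {x y : Fin n → ℝ} (hxy : x ≤ y) : minNbrAvg k x ≤ minNbrAvg k y := by
  unfold minNbrAvg
  gcongr ?_ / _
  calc ∑ j ∈ nbr k x (argminIdx x), x j ≤ ∑ j ∈ nbr k y (argminIdx y), x j :=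
        sum_le_sum_of_card_eq_of_le_compl (by rw [card_nbr, card_nbr])
          fun j hj j' hj' => le_of_mem_nbr_argminIdx hj hj'
    _ ≤ ∑ j ∈ nbr k y (argminIdx y), y j := sum_le_sum fun j _ => hxy j

lemma minNbrAvg_le_of_le_card_filter {x : Fin n → ℝ} {C : ℝ} (hk : 0 < k)
    (hC : k ≤ #{j | x j ≤ C}) : minNbrAvg k x ≤ C := by
  obtain ⟨L, hLC, hL⟩ := exists_subset_card_eq hC
  have hkn : k ≤ n := hC.trans ((card_le_univ _).trans_eq (Fintype.card_fin n))
  rw [minNbrAvg, div_le_iff₀ (by exact_mod_cast hk)]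
  calc ∑ j ∈ nbr k x (argminIdx x), x j ≤ ∑ j ∈ L, x j :=
        sum_le_sum_of_card_eq_of_le_compl (by rw [card_nbr, hL, min_eq_left hkn])
          fun j hj j' hj' => le_of_mem_nbr_argminIdx hj hj'
    _ ≤ #L • C := sum_le_card_nsmul _ _ _ fun j hj => (mem_filter.mp (hLC hj)).2
    _ = C * k := by rw [hL, nsmul_eq_mul, mul_comm]

lemma argminIdx_le_minNbrAvg (x : Fin n → ℝ) (hk : 0 < k) (hkn : k ≤ n) :
    x (argminIdx x) ≤ minNbrAvg k x := by
  rw [minNbrAvg, le_div_iff₀ (by exact_mod_cast hk)]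
  calc x (argminIdx x) * k = #(nbr k x (argminIdx x)) • x (argminIdx x) := by
        rw [card_nbr, min_eq_left hkn, nsmul_eq_mul, mul_comm]
    _ ≤ ∑ j ∈ nbr k x (argminIdx x), x j := card_nsmul_le_sum _ _ _ fun j _ => argminIdx_le x j

lemma le_minStep (hk : 0 < k) (hkn : k ≤ n) : id ≤ minStep (n := n) k := by
  intro x j
  rw [id, minStep_eq_update, Function.update_apply]
  split_ifs with h
  · exact h ▸ argminIdx_le_minNbrAvg x hk hkn
  · exact le_rfl

lemma minStep_apply_le {x : Fin n → ℝ} {C : ℝ} (hk : 0 < k) (hC : k ≤ #{j | x j ≤ C}) {j : Fin n}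
    (hj : x j ≤ C) : minStep k x j ≤ C := by
  rw [minStep_eq_update, Function.update_apply]
  split_ifs
  · exact minNbrAvg_le_of_le_card_filter hk hC
  · exact hj

lemma minStep_iterate_apply_le {x : Fin n → ℝ} {C : ℝ} (hk : 0 < k) (hC : k ≤ #{j | x j ≤ C})
    {j : Fin n} (hj : x j ≤ C) (t : ℕ) : (minStep k)^[t] x j ≤ C := by
  induction t generalizing x with
  | zero => exact hj
  | succ t ih =>
    rw [Function.iterate_succ_apply]
    refine ih (hC.trans (card_le_card fun i hi => ?_)) (minStep_apply_le hk hC hj)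
    exact mem_filter.mpr ⟨mem_univ i, minStep_apply_le hk hC (mem_filter.mp hi).2⟩

lemma minStep_iterate_apply_le_of_forall_le {x : Fin n → ℝ} {C : ℝ} (hk : 0 < k) (hkn : k ≤ n)
    (hC : ∀ j, x j ≤ C) (t : ℕ) (j : Fin n) : (minStep k)^[t] x j ≤ C := by
  refine minStep_iterate_apply_le hk ?_ (hC j) t
  rwa [filter_true_of_mem fun i _ => hC i, card_univ, Fintype.card_fin]

lemma card_filter_update_argminIdx_lt {x : Fin n → ℝ} {s v : ℝ} (hv : s ≤ v) :
    #{j | Function.update x (argminIdx x) v j < s} ≤ #{j | x j < s} - 1 := by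
  have hsub : ({j | Function.update x (argminIdx x) v j < s} : Finset (Fin n)) ⊆
      ({j | x j < s} : Finset _).erase (argminIdx x) := by
    intro j hj
    rw [mem_filter, Function.update_apply] at hj
    split_ifs at hj with h
    · exact absurd hj.2 hv.not_gt
    · exact mem_erase.mpr ⟨h, mem_filter.mpr hj⟩
  refine (card_le_card hsub).trans_eq ?_
  by_cases hmin : argminIdx x ∈ ({j | x j < s} : Finset _)
  · exact card_erase_of_mem hmin
  · have hempty : ({j | x j < s} : Finset _) = ∅ := filter_eq_empty_iff.mpr fun j _ hj =>
      hmin (mem_filter.mpr ⟨mem_univ _, (argminIdx_le x j).trans_lt hj⟩)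
    simp [hempty]

lemma card_filter_lt_minNbrAvg_le (x : Fin n → ℝ) (hk : 0 < k) (hkn : k ≤ n) :
    #{j | x j < minNbrAvg k x} ≤ k - 1 := by
  set B := nbr k x (argminIdx x)
  have hB : #B = k := (card_nbr k x _).trans (min_eq_left hkn)
  obtain ⟨j₁, hj₁, hle⟩ : ∃ j ∈ B, minNbrAvg k x ≤ x j := by
    refine exists_le_of_sum_le (card_pos.mp (by omega)) ?_
    rw [sum_const, hB, nsmul_eq_mul, minNbrAvg, mul_div_cancel₀ _ (by positivity)]
  have hsub : ({j | x j < minNbrAvg k x} : Finset (Fin n)) ⊆ B.erase j₁ := by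
    intro j hj
    have hlt := (mem_filter.mp hj).2
    have hjB : j ∈ B := by
      by_contra hjB
      exact (le_of_mem_nbr_argminIdx hj₁ hjB).not_gt (hlt.trans_le hle)
    exact mem_erase.mpr ⟨by rintro rfl; exact hle.not_gt hlt, hjB⟩
  exact (card_le_card hsub).trans_eq (by rw [card_erase_of_mem hj₁, hB])

lemma minNbrAvg_le_minStep_iterate (hk : 0 < k) (hkn : k ≤ n) (x : Fin n → ℝ) (j : Fin n) :
    minNbrAvg k x ≤ (minStep k)^[k - 1] x j := by
  have hcount : ∀ t, #{j | (minStep k)^[t] x j < minNbrAvg k x} ≤ k - 1 - t := by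
    intro t
    induction t with
    | zero => exact card_filter_lt_minNbrAvg_le x hk hkn
    | succ t ih =>
      rw [Function.iterate_succ_apply', minStep_eq_update]
      have hv : minNbrAvg k x ≤ minNbrAvg k ((minStep k)^[t] x) :=
        minNbrAvg_mono (Function.id_le_iterate_of_id_le (le_minStep hk hkn) t x)
      exact (card_filter_update_argminIdx_lt hv).trans (by omega)
  have hempty := card_eq_zero.mp (Nat.le_zero.mp ((hcount (k - 1)).trans_eq (Nat.sub_self _)))
  exact not_lt.mp (filter_eq_empty_iff.mp hempty (mem_univ j))

end MinStep

section MaxStep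

variable {n : ℕ} [NeZero n] {k : ℕ}

variable (k) in
noncomputable def maxNbrAvg (x : Fin n → ℝ) : ℝ :=
  (∑ j ∈ nbr k x (argmaxIdx x), x j) / k

variable (k) in
noncomputable def maxStep (x : Fin n → ℝ) : Fin n → ℝ :=
  upd k x (argmaxIdx x)

lemma maxNbrAvg_eq_neg_minNbrAvg_neg (x : Fin n → ℝ) : maxNbrAvg k x = -minNbrAvg k (-x) := by
  rw [maxNbrAvg, minNbrAvg, ← neg_div, ← sum_neg_distrib, nbr_neg]
  simp only [Pi.neg_apply, neg_neg]
  rfl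

lemma semiconj_neg_maxStep_minStep :
    Function.Semiconj Neg.neg (maxStep (n := n) k) (minStep k) := by
  intro x
  funext j
  change -Function.update x (argmaxIdx x) (maxNbrAvg k x) j =
    Function.update (-x) (argmaxIdx x) (minNbrAvg k (-x)) j
  rw [maxNbrAvg_eq_neg_minNbrAvg_neg, Function.update_apply, Function.update_apply]
  split_ifs <;> simp

lemma maxStep_iterate_apply (t : ℕ) (x : Fin n → ℝ) (j : Fin n) :
    (maxStep k)^[t] x j = -(minStep k)^[t] (-x) j := by
  rw [← semiconj_neg_maxStep_minStep.iterate_right t x, Pi.neg_apply, neg_neg]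

lemma maxStep_iterate_le_maxNbrAvg (hk : 0 < k) (hkn : k ≤ n) (x : Fin n → ℝ) (j : Fin n) :
    (maxStep k)^[k - 1] x j ≤ maxNbrAvg k x := by
  rw [maxStep_iterate_apply, maxNbrAvg_eq_neg_minNbrAvg_neg, neg_le_neg_iff]
  exact minNbrAvg_le_minStep_iterate hk hkn (-x) j

lemma le_maxStep_iterate_apply_of_forall_le {x : Fin n → ℝ} {C : ℝ} (hk : 0 < k) (hkn : k ≤ n)
    (hC : ∀ j, C ≤ x j) (t : ℕ) (j : Fin n) : C ≤ (maxStep k)^[t] x j := by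
  rw [maxStep_iterate_apply, le_neg]
  exact minStep_iterate_apply_le_of_forall_le hk hkn (fun i => neg_le_neg (hC i)) t j

end MaxStep

lemma maxNbrAvg_minStep_iterate_le {n k : ℕ} [NeZero n] (hk : 0 < k) (hkn : k ≤ n)
    (hnk : n < 2 * k) {x : Fin n → ℝ} {m M : ℝ} (hm : ∀ j, m ≤ x j) (hM : ∀ j, x j ≤ M) :
    k * maxNbrAvg k ((minStep k)^[k - 1] x) ≤ k * minNbrAvg k x + (k - 1) * (M - m) := by
  set y := (minStep k)^[k - 1] x
  have hk₀ : (k : ℝ) ≠ 0 := by positivity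
  set c := k * minNbrAvg k x - (k - 1) * m
  have hkB : k * minNbrAvg k x = ∑ j ∈ nbr k x (argminIdx x), x j := mul_div_cancel₀ _ hk₀
  have hBc : ∀ j ∈ nbr k x (argminIdx x), x j ≤ c := by
    intro j hj
    have h := add_card_sub_one_mul_le_sum (fun i _ => hm i) hj
    rw [card_nbr, min_eq_left hkn, ← hkB] at h
    linarith
  have hxc : k ≤ #{j | x j ≤ c} :=
    calc k = #(nbr k x (argminIdx x)) := by rw [card_nbr, min_eq_left hkn]
      _ ≤ #{j | x j ≤ c} := card_le_card fun j hj => mem_filter.mpr ⟨mem_univ j, hBc j hj⟩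
  have hyc : k ≤ #{j | y j ≤ c} := hxc.trans <| card_le_card fun j hj =>
    mem_filter.mpr ⟨mem_univ j, minStep_iterate_apply_le hk hxc (mem_filter.mp hj).2 _⟩
  set T := nbr k y (argmaxIdx y)
  have hT : #T = k := (card_nbr k y _).trans (min_eq_left hkn)
  obtain ⟨j₀, hj₀⟩ := inter_nonempty_of_card_lt_card_add_card (subset_univ T)
    (subset_univ {j | y j ≤ c}) (by rw [card_univ, Fintype.card_fin, hT]; omega)
  rw [mem_inter, mem_filter] at hj₀
  have hsum := sum_le_add_card_sub_one_mul
    (fun j _ => minStep_iterate_apply_le_of_forall_le hk hkn hM (k - 1) j) hj₀.1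
  rw [hT] at hsum
  have hkS : k * maxNbrAvg k y = ∑ j ∈ T, y j := mul_div_cancel₀ _ hk₀
  linarith [hj₀.2.2]

lemma traj_add_eq_iterate {n k : ℕ} (σ : ℕ → (Fin n → ℝ) → Fin n) (x0 : Fin n → ℝ) (t₀ u : ℕ)
    {g : (Fin n → ℝ) → Fin n} (hσ : ∀ i < u, σ (t₀ + i) = g) :
    traj k σ x0 (t₀ + u) = (fun x => upd k x (g x))^[u] (traj k σ x0 t₀) := by
  induction u with
  | zero => rfl
  | succ u ih =>
    rw [Function.iterate_succ_apply', ← ih fun i hi => hσ i (by omega), ← hσ u (by omega)]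
    rfl

/-- the shrinking sequence (minimum agent updates for `t = 0,…,k-2`, then the
maximum agent for `t = k-1,…,2k-3`) contracts the opinion spread by `1 - 1/k`. -/
theorem shrinking_sequence {n k : ℕ} [NeZero n] (hk : 1 ≤ k) (hkn : k ≤ n)
    (hnk : n < 2 * k) (x0 : Fin n → ℝ) (X : ℕ → Fin n → ℝ)
    (hX : X = traj k (fun t x => if t < k - 1 then argminIdx x else argmaxIdx x) x0) :
    sSup (Set.range (X (2 * k - 2))) - sInf (Set.range (X (2 * k - 2))) ≤
      (1 - 1 / (k : ℝ)) * (sSup (Set.range x0) - sInf (Set.range x0)) := by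
  subst hX
  set σ : ℕ → (Fin n → ℝ) → Fin n := fun t x => if t < k - 1 then argminIdx x else argmaxIdx x
  have hphase₁ : traj k σ x0 (k - 1) = (minStep k)^[k - 1] x0 := by
    have h := traj_add_eq_iterate (k := k) σ x0 0 (k - 1) (g := argminIdx) fun i hi => by
      simp [σ, hi]
    rwa [zero_add] at h
  have hphase₂ : traj k σ x0 (2 * k - 2) = (maxStep k)^[k - 1] ((minStep k)^[k - 1] x0) := by
    rw [show 2 * k - 2 = k - 1 + (k - 1) by omega, ← hphase₁]
    exact traj_add_eq_iterate σ x0 (k - 1) (k - 1) (g := argmaxIdx) fun i _ => by simp [σ]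
  rw [hphase₂]
  have hM : ∀ j, x0 j ≤ sSup (Set.range x0) :=
    fun j => le_csSup (Set.finite_range x0).bddAbove ⟨j, rfl⟩
  have hm : ∀ j, sInf (Set.range x0) ≤ x0 j :=
    fun j => csInf_le (Set.finite_range x0).bddBelow ⟨j, rfl⟩
  have hsup := csSup_le (Set.range_nonempty _) <| Set.forall_mem_range.mpr <|
    maxStep_iterate_le_maxNbrAvg hk hkn ((minStep k)^[k - 1] x0)
  have hinf := le_csInf (Set.range_nonempty _) <| Set.forall_mem_range.mpr <|
    le_maxStep_iterate_apply_of_forall_le hk hkn (minNbrAvg_le_minStep_iterate hk hkn x0) (k - 1)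
  have hcontract := maxNbrAvg_minStep_iterate_le hk hkn hnk hm hM
  have hk₀ : (0 : ℝ) < k := by exact_mod_cast hk
  rw [one_sub_div hk₀.ne', div_mul_eq_mul_div, le_div_iff₀ hk₀]
  nlinarith
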